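/- For a minimally generated numerical semigroup S = ⟨n₁, …, n_k⟩ with n₁ < ⋯ < n_k and k ≥ 2, the set R(S) = {ρ(n) : 0 ≠ n ∈ S} has exactly one limit point in ℝ, namely n_k/n₁. -/

import Mathlib

/-- The set of factorization lengths of `n` over the generators `gens`. -/
def lenSet (k : ℕ) (gens : Fin k → ℕ) (n : ℕ) : Set ℕ :=
  {l | ∃ x : Fin k → ℕ, n = ∑ i, x i * gens i ∧ l = ∑ i, x i}

/-- The elasticity ρ(n) = L(n)/ℓ(n) of `n`, as a real number. -/
noncomputable def rhoR (k : ℕ) (gens : Fin k → ℕ) (n : ℕ) : ℝ :=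
  ((sSup (lenSet k gens n) : ℕ) : ℝ) / ((sInf (lenSet k gens n) : ℕ) : ℝ)

/-! Every factorization of `n` has length between `n / n_k` and `n / n₁`. Conversely, replacing
`m` copies of a generator `g` by `g` copies of `m`, for `m = n₁` or `m = n_k`, until every other
generator occurs fewer than `m` times, yields a factorization whose length is within a constant
of `n / m`. Hence `ρ(n) → n_k / n₁` as `n → ∞` in `S`, so no other point accumulates, while
`ρ((t n_k + 1) n₁) = (t n_k + 1) / (t n₁ + 1)` tends to `n_k / n₁` without reaching it. -/

open Filter Topology

section Limits

variable {X α : Type*} [TopologicalSpace X]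

theorem eq_of_accPt_of_subset_image [T2Space X] {f : α → X} {A : Set α} {C : Set X} {v x : X}
    (hf : Tendsto f (cofinite ⊓ 𝓟 A) (𝓝 v)) (hC : C ⊆ f '' A) (hx : AccPt x (𝓟 C)) :
    x = v := by
  by_contra hne
  obtain ⟨U, hU, V, hV, hUV⟩ := Filter.disjoint_iff.1 (disjoint_nhds_nhds.2 hne)
  have hfin : {a | a ∈ A ∧ f a ∉ V}.Finite := by
    simpa [mem_inf_principal, Set.compl_ofPred] using hf hV
  have hxU : AccPt x (𝓟 (C ∩ U)) := accPt_iff_frequently.2 <|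
    ((accPt_iff_frequently.1 hx).and_eventually hU).mono fun _ ⟨⟨hy, hyC⟩, hyU⟩ => ⟨hy, hyC, hyU⟩
  refine Set.Infinite.of_accPt hxU ((hfin.image f).subset ?_)
  rintro _ ⟨hyC, hyU⟩
  obtain ⟨a, ha, rfl⟩ := hC hyC
  exact ⟨a, ⟨ha, Set.disjoint_left.1 hUV hyU⟩, rfl⟩

theorem accPt_of_tendsto {l : Filter α} [l.NeBot] {u : α → X} {C : Set X} {v : X}
    (hu : Tendsto u l (𝓝 v)) (hne : ∀ a, u a ≠ v) (hC : ∀ a, u a ∈ C) : AccPt v (𝓟 C) :=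
  accPt_iff_frequently.2 <| hu.frequently <| Frequently.of_forall fun a => ⟨hne a, hC a⟩

theorem tendsto_div_of_abs_mul_sub_le {l : Filter ℕ} (hl : l ≤ atTop) {c : ℕ → ℝ} {g C : ℝ}
    (hg : 0 < g) (h : ∀ᶠ n in l, |c n * g - n| ≤ C) :
    Tendsto (fun n => c n / n) l (𝓝 g⁻¹) := by
  have herr : Tendsto (fun n : ℕ => (c n * g - n) / n) l (𝓝 0) := by
    refine squeeze_zero_norm' ?_ ((tendsto_const_div_atTop_nhds_zero_nat C).mono_left hl)
    filter_upwards [h] with n hn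
    rw [norm_div, Real.norm_natCast]
    exact div_le_div_of_nonneg_right hn n.cast_nonneg
  have hpos : ∀ᶠ n : ℕ in l, n ≠ 0 := hl (eventually_ne_atTop 0)
  refine (((herr.const_add 1).div_const g).congr' ?_).trans (by rw [add_zero, one_div])
  filter_upwards [hpos] with n hn
  have : (n : ℝ) ≠ 0 := Nat.cast_ne_zero.2 hn
  field_simp
  ring

end Limits

section Factorizations

variable {k : ℕ} {gens : Fin k → ℕ} {n : ℕ}

theorem lenSet_nonempty_iff :
    (lenSet k gens n).Nonempty ↔ n ∈ AddSubmonoid.closure (Set.range gens) := by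
  simp [lenSet, AddSubmonoid.mem_closure_range_iff_of_fintype, Set.Nonempty]

theorem mul_le_of_mem_lenSet {m l : ℕ} (hm : ∀ i, m ≤ gens i) (hl : l ∈ lenSet k gens n) :
    l * m ≤ n := by
  obtain ⟨x, rfl, rfl⟩ := hl
  rw [Finset.sum_mul]
  exact Finset.sum_le_sum fun i _ => Nat.mul_le_mul_left _ (hm i)

theorem le_mul_of_mem_lenSet {M l : ℕ} (hM : ∀ i, gens i ≤ M) (hl : l ∈ lenSet k gens n) :
    n ≤ l * M := by
  obtain ⟨x, rfl, rfl⟩ := hl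
  rw [Finset.sum_mul]
  exact Finset.sum_le_sum fun i _ => Nat.mul_le_mul_left _ (hM i)

theorem exists_sum_mul_eq_and_lt (j : Fin k) (hj : 0 < gens j) (x : Fin k → ℕ) :
    ∃ y : Fin k → ℕ, ∑ i, y i * gens i = ∑ i, x i * gens i ∧ ∀ i ≠ j, y i < gens j := by
  refine ⟨fun i => x i % gens j + if i = j then ∑ i', x i' / gens j * gens i' else 0, ?_, ?_⟩
  · simp only [add_mul, Finset.sum_add_distrib, ite_mul, zero_mul, Finset.sum_ite_eq',
      Finset.mem_univ, if_true]
    rw [Finset.sum_mul, ← Finset.sum_add_distrib]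
    refine Finset.sum_congr rfl fun i _ => ?_
    conv_rhs => rw [← Nat.mod_add_div (x i) (gens j)]
    ring
  · intro i hi
    simpa [hi] using Nat.mod_lt (x i) hj

theorem exists_mem_lenSet_abs_mul_sub_le (j : Fin k) (hj : 0 < gens j) {M : ℕ}
    (hM : ∀ i, gens i ≤ M) (hn : n ∈ AddSubmonoid.closure (Set.range gens)) :
    ∃ l ∈ lenSet k gens n, |(l : ℝ) * gens j - n| ≤ k * gens j * M := by
  obtain ⟨_, x, hx, rfl⟩ := lenSet_nonempty_iff.2 hn
  obtain ⟨y, hy, hlt⟩ := exists_sum_mul_eq_and_lt j hj x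
  refine ⟨∑ i, y i, ⟨y, hx.trans hy.symm, rfl⟩, ?_⟩
  have hterm : ∀ i, |(y i : ℝ) * (gens j - gens i)| ≤ gens j * M := by
    intro i
    rcases eq_or_ne i j with rfl | hi
    · simp only [sub_self, mul_zero, abs_zero]
      positivity
    · rw [abs_mul, Nat.abs_cast]
      have hyi : (y i : ℝ) ≤ gens j := by exact_mod_cast (hlt i hi).le
      have hdiff : |(gens j : ℝ) - gens i| ≤ M := abs_sub_le_of_nonneg_of_le (Nat.cast_nonneg _)
        (by exact_mod_cast hM j) (Nat.cast_nonneg _) (by exact_mod_cast hM i)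
      exact mul_le_mul hyi hdiff (abs_nonneg _) (Nat.cast_nonneg _)
  calc |((∑ i, y i : ℕ) : ℝ) * gens j - n|
      = |∑ i, (y i : ℝ) * (gens j - gens i)| := by
        rw [hx, ← hy]
        push_cast
        rw [Finset.sum_mul, ← Finset.sum_sub_distrib]
        simp only [mul_sub]
    _ ≤ ∑ _i : Fin k, (gens j * M : ℝ) := (Finset.abs_sum_le_sum_abs _ _).trans
        (Finset.sum_le_sum fun i _ => hterm i)
    _ = k * gens j * M := by simp [mul_assoc]

end Factorizations

section Elasticity

variable {k : ℕ} {gens : Fin k → ℕ} {i j : Fin k}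

theorem abs_sSup_lenSet_mul_sub_le (hi : 0 < gens i) (hmin : ∀ l, gens i ≤ gens l) {M : ℕ}
    (hM : ∀ l, gens l ≤ M) {n : ℕ} (hn : n ∈ AddSubmonoid.closure (Set.range gens)) :
    |((sSup (lenSet k gens n) : ℕ) : ℝ) * gens i - n| ≤ k * gens i * M := by
  obtain ⟨l, hl, hln⟩ := exists_mem_lenSet_abs_mul_sub_le i hi hM hn
  have hbdd : BddAbove (lenSet k gens n) :=
    ⟨n, fun l hl => (Nat.le_mul_of_pos_right l hi).trans (mul_le_of_mem_lenSet hmin hl)⟩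
  have hupper : ((sSup (lenSet k gens n) : ℕ) : ℝ) * gens i ≤ n := by
    exact_mod_cast mul_le_of_mem_lenSet hmin (Nat.sSup_mem ⟨l, hl⟩ hbdd)
  have hlower : (l : ℝ) * gens i ≤ ((sSup (lenSet k gens n) : ℕ) : ℝ) * gens i := by
    gcongr
    exact le_csSup hbdd hl
  have hC : (0 : ℝ) ≤ k * gens i * M := by positivity
  rw [abs_le] at hln ⊢
  constructor <;> linarith [hln.1, hln.2]

theorem abs_sInf_lenSet_mul_sub_le (hj : 0 < gens j) (hmax : ∀ l, gens l ≤ gens j) {n : ℕ}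
    (hn : n ∈ AddSubmonoid.closure (Set.range gens)) :
    |((sInf (lenSet k gens n) : ℕ) : ℝ) * gens j - n| ≤ k * gens j * gens j := by
  obtain ⟨l, hl, hln⟩ := exists_mem_lenSet_abs_mul_sub_le j hj hmax hn
  have hlower : (n : ℝ) ≤ ((sInf (lenSet k gens n) : ℕ) : ℝ) * gens j := by
    exact_mod_cast le_mul_of_mem_lenSet hmax (Nat.sInf_mem ⟨l, hl⟩)
  have hupper : ((sInf (lenSet k gens n) : ℕ) : ℝ) * gens j ≤ l * gens j := by
    gcongr
    exact Nat.sInf_le hl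
  have hC : (0 : ℝ) ≤ k * gens j * gens j := by positivity
  rw [abs_le] at hln ⊢
  constructor <;> linarith [hln.1, hln.2]

theorem tendsto_rhoR (hi : 0 < gens i) (hmin : ∀ l, gens i ≤ gens l)
    (hmax : ∀ l, gens l ≤ gens j) :
    Tendsto (rhoR k gens) (atTop ⊓ 𝓟 (AddSubmonoid.closure (Set.range gens)))
      (𝓝 ((gens j : ℝ) / gens i)) := by
  have hj : 0 < gens j := hi.trans_le (hmax i)
  have hS : ∀ᶠ n in atTop ⊓ 𝓟 (AddSubmonoid.closure (Set.range gens) : Set ℕ),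
      n ∈ AddSubmonoid.closure (Set.range gens) :=
    mem_inf_of_right (mem_principal_self _)
  have hsup := tendsto_div_of_abs_mul_sub_le inf_le_left (Nat.cast_pos.2 hi)
    (hS.mono fun _ hn => abs_sSup_lenSet_mul_sub_le hi hmin hmax hn)
  have hinf := tendsto_div_of_abs_mul_sub_le inf_le_left (Nat.cast_pos.2 hj)
    (hS.mono fun _ hn => abs_sInf_lenSet_mul_sub_le hj hmax hn)
  rw [← inv_div_inv]
  refine (hsup.div hinf (inv_ne_zero (Nat.cast_pos.2 hj).ne')).congr' ?_
  filter_upwards [(inf_le_left : _ ≤ atTop) (eventually_ne_atTop 0)] with n hn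
  exact div_div_div_cancel_right₀ (Nat.cast_ne_zero.2 hn) _ _

theorem isGreatest_lenSet_mul (hi : 0 < gens i) (hmin : ∀ l, gens i ≤ gens l) (c : ℕ) :
    IsGreatest (lenSet k gens (c * gens i)) c :=
  ⟨⟨Pi.single i c, by simp [Pi.single_apply], by simp⟩,
    fun _ hl => Nat.le_of_mul_le_mul_right (mul_le_of_mem_lenSet hmin hl) hi⟩

theorem isLeast_lenSet_mul_add (hi : 0 < gens i) (hmax : ∀ l, gens l ≤ gens j) (c : ℕ) :
    IsLeast (lenSet k gens (c * gens j + gens i)) (c + 1) := by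
  refine ⟨⟨Pi.single j c + Pi.single i 1, ?_, ?_⟩, fun l hl => ?_⟩
  · simp [add_mul, Finset.sum_add_distrib, Pi.single_apply]
  · simp [Finset.sum_add_distrib]
  · have := le_mul_of_mem_lenSet hmax hl
    by_contra! h
    nlinarith

theorem rhoR_add_one_mul (hi : 0 < gens i) (hmin : ∀ l, gens i ≤ gens l)
    (hmax : ∀ l, gens l ≤ gens j) (t : ℕ) :
    rhoR k gens ((t * gens j + 1) * gens i) =
      ((t * gens j + 1 : ℕ) : ℝ) / (t * gens i + 1 : ℕ) := by
  rw [rhoR, (isGreatest_lenSet_mul hi hmin _).csSup_eq,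
    show (t * gens j + 1) * gens i = t * gens i * gens j + gens i by ring,
    (isLeast_lenSet_mul_add hi hmax _).csInf_eq]

theorem rhoR_add_one_mul_ne (hi : 0 < gens i) (hmin : ∀ l, gens i ≤ gens l)
    (hmax : ∀ l, gens l ≤ gens j) (hlt : gens i < gens j) (t : ℕ) :
    rhoR k gens ((t * gens j + 1) * gens i) ≠ (gens j : ℝ) / gens i := by
  rw [rhoR_add_one_mul hi hmin hmax, ne_eq, div_eq_div_iff (by positivity) (by positivity)]
  push_cast
  intro h
  have : (gens i : ℝ) < gens j := by exact_mod_cast hlt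
  linarith

end Elasticity

/-- For a minimally generated numerical semigroup S = ⟨n₁ < ⋯ < n_k⟩ with k ≥ 2,
the set R(S) = {ρ(n) : 0 ≠ n ∈ S} has exactly one limit point in ℝ, namely n_k/n₁. -/
theorem stmt_13 (k : ℕ) (hk : 2 ≤ k) (gens : Fin k → ℕ)
    (hmono : StrictMono gens)
    (hmin : ∀ i, gens i ∉ AddSubmonoid.closure (Set.range gens \ {gens i}))
    (R : Set ℝ)
    (hR : R = {x : ℝ | ∃ n : ℕ, n ≠ 0 ∧ n ∈ AddSubmonoid.closure (Set.range gens) ∧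
      x = rhoR k gens n}) :
    ∀ x : ℝ, AccPt x (Filter.principal R) ↔
      x = (gens ⟨k - 1, by omega⟩ : ℝ) / (gens ⟨0, by omega⟩ : ℝ) := by
  set i : Fin k := ⟨0, by omega⟩
  set j : Fin k := ⟨k - 1, by omega⟩
  have hpos : 0 < gens i := Nat.pos_of_ne_zero fun h => hmin i (h ▸ zero_mem _)
  have hfirst : ∀ l, gens i ≤ gens l := fun l => hmono.monotone (show 0 ≤ l.val by omega)
  have hlast : ∀ l, gens l ≤ gens j := fun l => hmono.monotone (show l.val ≤ k - 1 by omega)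
  have hlt : gens i < gens j := hmono (show 0 < k - 1 by omega)
  have hlim := tendsto_rhoR hpos hfirst hlast
  subst hR
  intro x
  constructor
  · refine eq_of_accPt_of_subset_image (by rwa [Nat.cofinite_eq_atTop]) ?_
    rintro _ ⟨n, -, hn, rfl⟩
    exact ⟨n, hn, rfl⟩
  · rintro rfl
    have hmem : ∀ t, (t * gens j + 1) * gens i ∈ AddSubmonoid.closure (Set.range gens) :=
      fun t => lenSet_nonempty_iff.1 ⟨_, (isGreatest_lenSet_mul hpos hfirst _).1⟩
    have hgrow : ∀ t, t ≤ (t * gens j + 1) * gens i := fun t =>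
      ((Nat.le_mul_of_pos_right t (hpos.trans hlt)).trans (Nat.le_succ _)).trans
        (Nat.le_mul_of_pos_right _ hpos)
    have hseq : Tendsto (fun t => (t * gens j + 1) * gens i) atTop
        (atTop ⊓ 𝓟 (AddSubmonoid.closure (Set.range gens))) :=
      tendsto_inf.2 ⟨tendsto_atTop_mono hgrow tendsto_id,
        tendsto_principal.2 (Eventually.of_forall hmem)⟩
    exact accPt_of_tendsto (hlim.comp hseq) (rhoR_add_one_mul_ne hpos hfirst hlast hlt)
      fun t => ⟨_, by positivity, hmem t, rfl⟩
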